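/- For every integer n ≥ 1, the polynomial identity Ŵ_{2n+1}(x) = Σ_{j=0}^{n} (2j+1)! V(n,j) x^j (1−x)^{n−j} holds in ℤ[x]. -/

import Mathlib

open Polynomial Finset

/-- The word `0 π(1) π(2) ⋯ π(n)` of `π ∈ S_n`, with values of `π` taken in `{1,…,n}`:
`lword π 0 = 0` and `lword π j = π(j)` for `1 ≤ j ≤ n` (junk value `0` outside the range). -/
def lword {n : ℕ} (π : Equiv.Perm (Fin n)) (j : ℕ) : ℕ :=
  if j = 0 then 0
  else if h : j - 1 < n then ((π ⟨j - 1, h⟩ : Fin n) : ℕ) + 1 else 0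

/-- The number of left peaks of `π ∈ S_n`: indices `i ∈ {1,…,n-1}` with
`π(i-1) < π(i) > π(i+1)`, where `π(0) = 0`. -/
def lpk (n : ℕ) (π : Equiv.Perm (Fin n)) : ℕ :=
  ((Finset.Icc 1 (n - 1)).filter (fun i =>
    lword π (i - 1) < lword π i ∧ lword π (i + 1) < lword π i)).card

/-- The left peak polynomial `Ŵ_n(x) = Σ_{π ∈ S_n} x^{lpk(π)}`. -/
noncomputable def Wpoly (n : ℕ) : Polynomial ℤ :=
  ∑ π : Equiv.Perm (Fin n), Polynomial.X ^ lpk n π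

/-- The central factorial numbers of odd indices `V(n,k)`, defined by the recurrence
`V(n,k) = V(n-1,k-1) + (2k+1)^2 * V(n-1,k)` with `V(0,0) = 1` and `V(0,k) = 0` for `k ≠ 0`. -/
def V : ℕ → ℕ → ℤ
  | 0, 0 => 1
  | 0, _ + 1 => 0
  | n + 1, 0 => V n 0
  | n + 1, k + 1 => V n k + (2 * ((k : ℤ) + 1) + 1) ^ 2 * V n (k + 1)

lemma Fmono (m a b : ℕ) :
    (1 + C (m:ℤ) * X) * (X^a * (1-X)^b) + 2*X*(1-X) * derivative (X^a * (1-X)^b)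
    = C ((m:ℤ)+1-2*(b:ℤ)) * (X^(a+1) * (1-X)^b) + C (2*(a:ℤ)+1) * (X^a * (1-X)^(b+1)) := by
  have hd : derivative ((1-X)^b : ℤ[X]) = C (b:ℤ) * (1-X)^(b-1) * (-1) := by
    rw [derivative_pow]
    simp
  rw [derivative_mul, derivative_X_pow, hd]
  cases a with
  | zero =>
    cases b with
    | zero => simp only [map_add, map_sub, map_mul, map_one, map_ofNat, C_eq_natCast, C_0, Nat.cast_add, Nat.cast_mul, Nat.cast_one]; push_cast; simp; ring
    | succ b => simp only [Nat.add_sub_cancel, pow_zero, pow_succ]; simp only [map_add, map_sub, map_mul, map_one, map_ofNat, C_eq_natCast, C_0, Nat.cast_add, Nat.cast_mul, Nat.cast_one]; push_cast; ring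
  | succ a =>
    cases b with
    | zero => simp only [Nat.add_sub_cancel, pow_zero, pow_succ]; simp only [map_add, map_sub, map_mul, map_one, map_ofNat, C_eq_natCast, C_0, Nat.cast_add, Nat.cast_mul, Nat.cast_one]; push_cast; ring
    | succ b => simp only [Nat.add_sub_cancel, pow_succ]; simp only [map_add, map_sub, map_mul, map_one, map_ofNat, C_eq_natCast, C_0, Nat.cast_add, Nat.cast_mul, Nat.cast_one]; push_cast; ring

noncomputable def Fop (m : ℕ) (P : Polynomial ℤ) : Polynomial ℤ :=
  (1 + C (m:ℤ) * X) * P + 2*X*(1-X) * derivative P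

lemma Fop_mono (m a b : ℕ) :
    Fop m (X^a * (1-X)^b)
    = C ((m:ℤ)+1-2*(b:ℤ)) * (X^(a+1) * (1-X)^b) + C (2*(a:ℤ)+1) * (X^a * (1-X)^(b+1)) :=
  Fmono m a b

lemma Fop_sum (m : ℕ) {α : Type*} (s : Finset α) (f : α → Polynomial ℤ) :
    Fop m (∑ i ∈ s, f i) = ∑ i ∈ s, Fop m (f i) := by
  simp [Fop, derivative_sum, Finset.mul_sum, Finset.sum_add_distrib]

lemma Fop_C_mul (m : ℕ) (c : ℤ) (P : Polynomial ℤ) : Fop m (C c * P) = C c * Fop m P := by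
  simp only [Fop, derivative_C_mul]; ring

lemma Fop_add (m : ℕ) (P Q : Polynomial ℤ) : Fop m (P + Q) = Fop m P + Fop m Q := by
  simp only [Fop, derivative_add]; ring

lemma Vzero : ∀ n k : ℕ, n < k → V n k = 0
  | 0, k+1, _ => rfl
  | n+1, k+1, h => by
    rw [V]
    rw [Vzero n k (by omega), Vzero n (k+1) (by omega)]
    ring

noncomputable def Rp (n : ℕ) : Polynomial ℤ :=
  ∑ j ∈ Finset.range (n + 1), C (((2 * j + 1).factorial : ℤ) * V n j) * X ^ j * (1 - X) ^ (n - j)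

def A (n j : ℕ) : ℤ := ((2 * j + 1).factorial : ℤ) * V n j

lemma Arec (n j : ℕ) :
    A (n+1) j = (2*(j:ℤ)+1)*(2*j) * A n (j-1) + (2*(j:ℤ)+1)^2 * A n j := by
  cases j with
  | zero => simp [A, V]
  | succ k =>
    show A (n+1) (k+1) = _
    simp only [A, V, Nat.add_sub_cancel]
    have hf : ((2*(k+1)+1).factorial : ℤ) = (2*(k:ℤ)+3) * (2*(k:ℤ)+2) * ((2*k+1).factorial : ℤ) := by
      have : 2*(k+1)+1 = (2*k+1) + 1 + 1 := by omega
      rw [this, Nat.factorial_succ, Nat.factorial_succ]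
      push_cast; ring
    rw [hf]; push_cast; ring

noncomputable def Umon (n i : ℕ) : Polynomial ℤ := X^i * (1-X)^(n+2-i)

lemma Rp_eq (n : ℕ) : Rp n = ∑ j ∈ Finset.range (n+1), C (A n j) * (X^j * (1-X)^(n-j)) := by
  rw [Rp]
  refine Finset.sum_congr rfl (fun j hj => ?_)
  rw [A, mul_assoc]

lemma C_int (z : ℤ) : C z = (z : Polynomial ℤ) := by simpa using C_eq_intCast z

lemma keyalg (n : ℕ) : Fop (2*n+2) (Fop (2*n+1) (Rp n)) = Rp (n+1) := by
  have hL : Fop (2*n+2) (Fop (2*n+1) (Rp n)) =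
      ∑ j ∈ Finset.range (n+1),
        (C (A n j * ((2*(j:ℤ)+2)*(2*(j:ℤ)+3))) * Umon n (j+2)
         + C (A n j * ((2*(j:ℤ)+2)*(2*(j:ℤ)+3) + (2*(j:ℤ)+1)^2)) * Umon n (j+1)
         + C (A n j * (2*(j:ℤ)+1)^2) * Umon n j) := by
    rw [Rp_eq, Fop_sum, Fop_sum]
    refine Finset.sum_congr rfl (fun j hj => ?_)
    have hjn : j ≤ n := Nat.lt_succ_iff.mp (Finset.mem_range.mp hj)
    simp only [Fop_C_mul, Fop_mono, Fop_add, mul_add, Fop_C_mul]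
    simp only [Umon, show n+2-(j+2) = n-j from by omega,
      show n+2-(j+1) = n-j+1 from by omega, show n+2-j = n-j+2 from by omega]
    simp only [C_int]
    push_cast [Nat.cast_sub hjn]
    ring
  have hR : Rp (n+1) = ∑ j ∈ Finset.range (n+2), C (A (n+1) j) * (Umon n (j+1) + Umon n j) := by
    have h1 : Rp (n+1) = (X + (1-X)) * Rp (n+1) := by ring_nf
    rw [h1, Rp_eq, Finset.mul_sum]
    refine Finset.sum_congr rfl (fun j hj => ?_)
    have hjn : j ≤ n+1 := Nat.lt_succ_iff.mp (Finset.mem_range.mp hj)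
    simp only [Umon, show n+2-(j+1) = (n+1-j) from by omega,
      show n+2-j = (n+1-j)+1 from by omega]
    rw [pow_succ]
    ring
  have h1 : ∑ j ∈ Finset.range (n+2),
        C ((2*(j:ℤ)+1)*(2*(j:ℤ)) * A n (j-1)) * (Umon n (j+1) + Umon n j)
      = ∑ j ∈ Finset.range (n+1),
        C ((2*(j:ℤ)+3)*(2*(j:ℤ)+2) * A n j) * (Umon n (j+2) + Umon n (j+1)) := by
    rw [show n+2 = (n+1)+1 from rfl,
      Finset.sum_range_succ' (fun j => C ((2*(j:ℤ)+1)*(2*(j:ℤ)) * A n (j-1)) * (Umon n (j+1) + Umon n j)) (n+1)]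
    rw [show ((2*((0:ℕ):ℤ)+1)*(2*((0:ℕ):ℤ)) * A n (0-1)) = 0 by push_cast; ring]
    rw [C_0, zero_mul, add_zero]
    refine Finset.sum_congr rfl (fun j hj => ?_)
    rw [show j+1+1 = j+2 from rfl, Nat.add_sub_cancel]
    simp only [C_int]
    push_cast
    ring
  have h2 : ∑ j ∈ Finset.range (n+2),
        C ((2*(j:ℤ)+1)^2 * A n j) * (Umon n (j+1) + Umon n j)
      = ∑ j ∈ Finset.range (n+1),
        C ((2*(j:ℤ)+1)^2 * A n j) * (Umon n (j+1) + Umon n j) := by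
    rw [show n+2 = (n+1)+1 from rfl, Finset.sum_range_succ]
    have hA0 : A n (n+1) = 0 := by rw [A, Vzero n (n+1) (by omega)]; ring
    rw [hA0, mul_zero, C_0, zero_mul, add_zero]
  have hsplit : ∀ j : ℕ, C (A (n+1) j) * (Umon n (j+1) + Umon n j)
      = C ((2*(j:ℤ)+1)*(2*(j:ℤ)) * A n (j-1)) * (Umon n (j+1) + Umon n j)
        + C ((2*(j:ℤ)+1)^2 * A n j) * (Umon n (j+1) + Umon n j) := by
    intro j
    rw [← add_mul, ← C_add, ← Arec]
  have hR2 : Rp (n+1) = ∑ j ∈ Finset.range (n+1),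
      (C ((2*(j:ℤ)+3)*(2*(j:ℤ)+2) * A n j) * (Umon n (j+2) + Umon n (j+1))
       + C ((2*(j:ℤ)+1)^2 * A n j) * (Umon n (j+1) + Umon n j)) := by
    rw [hR]
    simp only [hsplit]
    rw [Finset.sum_add_distrib, h1, h2, ← Finset.sum_add_distrib]
  rw [hL, hR2]
  refine Finset.sum_congr rfl (fun j hj => ?_)
  simp only [C_int]
  push_cast
  ring

/-- `σ` as a total function on `ℕ` (junk value `0` out of range). -/
def natp {m : ℕ} (σ : Equiv.Perm (Fin m)) (x : ℕ) : ℕ :=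
  if h : x < m then (σ ⟨x, h⟩ : ℕ) else 0

lemma natp_lt {m : ℕ} (σ : Equiv.Perm (Fin m)) {x : ℕ} (h : x < m) : natp σ x < m := by
  rw [natp, dif_pos h]; exact (σ _).isLt

lemma natp_lt_succ {m : ℕ} (σ : Equiv.Perm (Fin m)) (x : ℕ) : natp σ x < m + 1 := by
  rw [natp]; split
  · exact (σ _).isLt.trans (Nat.lt_succ_self m)
  · omega

lemma natp_inj {m : ℕ} (σ : Equiv.Perm (Fin m)) {x y : ℕ} (hx : x < m) (hy : y < m)
    (h : natp σ x = natp σ y) : x = y := by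
  rw [natp, dif_pos hx, natp, dif_pos hy] at h
  have := σ.injective (Fin.ext h)
  exact congrArg Fin.val this

/-- insertion of the maximum value `m` at position `p`, as a function. -/
def insFun {m : ℕ} (σ : Equiv.Perm (Fin m)) (p : Fin (m+1)) (i : Fin (m+1)) : Fin (m+1) :=
  ⟨if (i:ℕ) = (p:ℕ) then m else if (i:ℕ) < (p:ℕ) then natp σ i else natp σ ((i:ℕ)-1), by
    split_ifs
    · omega
    · exact natp_lt_succ σ _
    · exact natp_lt_succ σ _⟩

lemma insFun_inj {m : ℕ} (σ : Equiv.Perm (Fin m)) (p : Fin (m+1)) :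
    Function.Injective (insFun σ p) := by
  intro i j hij
  have hij' := congrArg Fin.val hij
  simp only [insFun] at hij'
  have hi := i.isLt; have hj := j.isLt; have hp := p.isLt
  apply Fin.ext
  by_cases h1 : (i:ℕ) = (p:ℕ) <;> by_cases h2 : (j:ℕ) = (p:ℕ)
  · omega
  · rw [if_pos h1, if_neg h2] at hij'
    split_ifs at hij' with h3
    · exact absurd hij'.symm (Nat.ne_of_lt (natp_lt σ (by omega)))
    · exact absurd hij'.symm (Nat.ne_of_lt (natp_lt σ (by omega)))
  · rw [if_neg h1, if_pos h2] at hij'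
    split_ifs at hij' with h3
    · exact absurd hij' (Nat.ne_of_lt (natp_lt σ (by omega)))
    · exact absurd hij' (Nat.ne_of_lt (natp_lt σ (by omega)))
  · rw [if_neg h1, if_neg h2] at hij'
    split_ifs at hij' with h3 h4 h4
    · exact natp_inj σ (by omega) (by omega) hij'
    · have := natp_inj σ (by omega) (by omega) hij'; omega
    · have := natp_inj σ (by omega) (by omega) hij'; omega
    · have := natp_inj σ (by omega) (by omega) hij'; omega

noncomputable def insPerm {m : ℕ} (σ : Equiv.Perm (Fin m)) (p : Fin (m+1)) :
    Equiv.Perm (Fin (m+1)) :=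
  Equiv.ofBijective (insFun σ p) (Finite.injective_iff_bijective.mp (insFun_inj σ p))

lemma insPerm_apply {m : ℕ} (σ : Equiv.Perm (Fin m)) (p : Fin (m+1)) (i : Fin (m+1)) :
    insPerm σ p i = insFun σ p i := rfl

lemma lword_natp {m : ℕ} (σ : Equiv.Perm (Fin m)) {j : ℕ} (h0 : j ≠ 0) (hm : j - 1 < m) :
    lword σ j = natp σ (j-1) + 1 := by
  rw [lword, if_neg h0, dif_pos hm, natp, dif_pos hm]

lemma lword_zero_of_gt {m : ℕ} (σ : Equiv.Perm (Fin m)) {j : ℕ} (h : ¬ (j - 1 < m)) :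
    lword σ j = 0 := by
  by_cases h0 : j = 0
  · rw [lword, if_pos h0]
  · rw [lword, if_neg h0, dif_neg h]

lemma lword_ins {m : ℕ} (σ : Equiv.Perm (Fin m)) (p : Fin (m+1)) (j : ℕ) :
    lword (insPerm σ p) j =
      if j = (p:ℕ)+1 then m+1 else if j < (p:ℕ)+1 then lword σ j else lword σ (j-1) := by
  have hp := p.isLt
  by_cases h0 : j = 0
  · subst h0
    simp [lword]
  by_cases hm : j - 1 < m + 1
  · rw [lword_natp (insPerm σ p) h0 hm]
    have : natp (insPerm σ p) (j-1) = (insFun σ p ⟨j-1, hm⟩ : ℕ) := by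
      rw [natp, dif_pos hm]; rfl
    rw [this]
    simp only [insFun]
    by_cases he : j - 1 = (p:ℕ)
    · rw [if_pos he, if_pos (by omega)]
    · rw [if_neg he]
      by_cases hlt : j - 1 < (p:ℕ)
      · rw [if_pos hlt, if_neg (by omega), if_pos (by omega),
          lword_natp σ h0 (by omega)]
      · rw [if_neg hlt, if_neg (by omega), if_neg (by omega),
          lword_natp σ (show j - 1 ≠ 0 by omega) (by omega)]
  · rw [lword_zero_of_gt _ hm, if_neg (by omega), if_neg (by omega),
      lword_zero_of_gt σ (by omega)]

lemma lword_le {m : ℕ} (σ : Equiv.Perm (Fin m)) (j : ℕ) : lword σ j ≤ m := by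
  rw [lword]
  split
  · omega
  · split
    · exact (σ _).isLt
    · omega

lemma lword_zero {m : ℕ} (σ : Equiv.Perm (Fin m)) : lword σ 0 = 0 := rfl

def pkset {m : ℕ} (σ : Equiv.Perm (Fin m)) : Finset ℕ :=
  (Finset.Icc 1 (m - 1)).filter (fun i =>
    lword σ (i - 1) < lword σ i ∧ lword σ (i + 1) < lword σ i)

lemma lpk_eq_card {m : ℕ} (σ : Equiv.Perm (Fin m)) : lpk m σ = (pkset σ).card := rfl

lemma pkset_mem {m : ℕ} (σ : Equiv.Perm (Fin m)) {i : ℕ} :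
    i ∈ pkset σ ↔ 1 ≤ i ∧ i ≤ m - 1 ∧ lword σ (i-1) < lword σ i ∧ lword σ (i+1) < lword σ i := by
  simp [pkset, Finset.mem_filter, Finset.mem_Icc, and_assoc]

lemma pkset_not_adjacent {m : ℕ} (σ : Equiv.Perm (Fin m)) {i : ℕ}
    (h1 : i ∈ pkset σ) (h2 : i + 1 ∈ pkset σ) : False := by
  rw [pkset_mem] at h1 h2
  have e : i + 1 - 1 = i := by omega
  rw [e] at h2
  omega

lemma slot_count {m : ℕ} (σ : Equiv.Perm (Fin m)) (p : Fin (m+1)) :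
    lpk (m+1) (insPerm σ p) + ((pkset σ) ∩ {(p:ℕ), (p:ℕ)+1}).card
      = lpk m σ + (if (p:ℕ)+1 ≤ m then 1 else 0) := by
  have hp := p.isLt
  have hW := lword_ins σ p
  set q : ℕ := (p:ℕ) + 1 with hqdef
  have hWq : lword (insPerm σ p) q = m + 1 := by rw [hW, if_pos rfl]
  have hWlt : ∀ j, j < q → lword (insPerm σ p) j = lword σ j := by
    intro j hj; rw [hW, if_neg (by omega), if_pos hj]
  have hWgt : ∀ j, q < j → lword (insPerm σ p) j = lword σ (j-1) := by
    intro j hj; rw [hW, if_neg (by omega), if_neg (by omega)]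
  have hWle : ∀ j, j ≠ q → lword (insPerm σ p) j ≤ m := by
    intro j hj
    rcases lt_or_gt_of_ne hj with h | h
    · rw [hWlt j h]; exact lword_le σ j
    · rw [hWgt j h]; exact lword_le σ (j-1)
  have hq_mem : q ∈ pkset (insPerm σ p) ↔ q ≤ m := by
    constructor
    · intro h
      rw [pkset_mem] at h
      omega
    · intro h
      rw [pkset_mem]
      refine ⟨by omega, by omega, ?_, ?_⟩
      · rw [hWq]
        have := hWle (q-1) (by omega)
        omega
      · rw [hWq]
        have := hWle (q+1) (by omega)
        omega
  have h3 : ((pkset (insPerm σ p)).erase q).card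
      = (pkset σ \ {(p:ℕ), q}).card := by
    apply Finset.card_nbij' (i := fun a => if a < q then a else a - 1)
      (j := fun b => if b < q then b else b + 1)
    · -- maps into target
      intro a ha
      rw [Finset.mem_coe] at ha ⊢; rw [Finset.mem_erase] at ha
      obtain ⟨hne, hmem⟩ := ha
      rw [pkset_mem] at hmem
      obtain ⟨ha1, ham, hl, hr⟩ := hmem
      have ham' : a ≤ m := by omega
      by_cases hlt : a < q
      · have ha1q : a + 1 ≠ q := by
          intro he
          rw [he, hWq] at hr
          have := hWle a hne
          omega
        rw [hWlt (a-1) (by omega), hWlt a hlt] at hl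
        rw [hWlt (a+1) (by omega), hWlt a hlt] at hr
        simp only [if_pos hlt, Finset.mem_sdiff, pkset_mem]
        refine ⟨⟨by omega, by omega, hl, hr⟩, by simp; omega⟩
      · have haq2 : a ≠ q + 1 := by
          intro he
          rw [he, show q + 1 - 1 = q from rfl, hWq] at hl
          have := hWle (q+1) (by omega)
          omega
        have hgt : q + 2 ≤ a := by omega
        rw [hWgt (a-1) (by omega), hWgt a (by omega)] at hl
        rw [hWgt (a+1) (by omega), hWgt a (by omega)] at hr
        rw [show a + 1 - 1 = (a - 1) + 1 by omega] at hr
        rw [show a - 1 - 1 = a - 1 - 1 from rfl] at hl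
        simp only [if_neg hlt, Finset.mem_sdiff, pkset_mem]
        refine ⟨⟨by omega, by omega, hl, hr⟩, by simp; omega⟩
    · -- reverse maps into source
      intro b hb
      rw [Finset.mem_coe] at hb ⊢; rw [Finset.mem_sdiff, pkset_mem] at hb
      obtain ⟨⟨hb1, hbm, hl, hr⟩, hnot⟩ := hb
      simp only [Finset.mem_insert, Finset.mem_singleton] at hnot
      push_neg at hnot
      by_cases hlt : b < q
      · have hb2 : b + 1 < q := by omega
        simp only [if_pos hlt, Finset.mem_erase, pkset_mem]
        refine ⟨by omega, by omega, by omega, ?_, ?_⟩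
        · rw [hWlt (b-1) (by omega), hWlt b hlt]
          exact hl
        · rw [hWlt (b+1) hb2, hWlt b hlt]
          exact hr
      · have hb2 : q + 1 ≤ b := by omega
        simp only [if_neg hlt, Finset.mem_erase, pkset_mem]
        refine ⟨by omega, by omega, by omega, ?_, ?_⟩
        · rw [hWgt (b+1-1) (by omega), hWgt (b+1) (by omega)]
          rw [show b + 1 - 1 - 1 = b - 1 by omega, show b + 1 - 1 = b by omega]
          exact hl
        · rw [hWgt (b+1+1) (by omega), hWgt (b+1) (by omega)]
          rw [show b + 1 + 1 - 1 = b + 1 by omega, show b + 1 - 1 = b by omega]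
          exact hr
    · -- left inverse
      intro a ha
      rw [Finset.mem_coe] at ha; rw [Finset.mem_erase, pkset_mem] at ha
      by_cases hlt : a < q
      · simp only [if_pos hlt]
      · have haq2 : a ≠ q + 1 := by
          intro he
          obtain ⟨hne, _, _, hl, _⟩ := ha
          rw [he, show q + 1 - 1 = q from rfl, hWq] at hl
          have := hWle (q+1) (by omega)
          omega
        have hne := ha.1
        simp only [if_neg hlt, if_neg (show ¬ (a - 1 < q) by omega)]
        omega
    · -- right inverse
      intro b hb
      rw [Finset.mem_coe] at hb; rw [Finset.mem_sdiff, pkset_mem] at hb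
      obtain ⟨⟨hb1, hbm, _, _⟩, hnot⟩ := hb
      simp only [Finset.mem_insert, Finset.mem_singleton] at hnot
      push_neg at hnot
      by_cases hlt : b < q
      · simp only [if_pos hlt]
      · simp only [if_neg hlt, if_neg (show ¬ (b + 1 < q) by omega)]
        omega
  have h1 : (pkset (insPerm σ p)).card
      = ((pkset (insPerm σ p)).erase q).card + (if q ≤ m then 1 else 0) := by
    by_cases hq : q ≤ m
    · rw [if_pos hq]
      have := Finset.card_erase_add_one (hq_mem.mpr hq)
      omega
    · rw [if_neg hq, Finset.erase_eq_of_notMem (fun hmem => hq (hq_mem.mp hmem)), add_zero]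
  have h2 : (pkset σ \ {(p:ℕ), q}).card + (pkset σ ∩ {(p:ℕ), q}).card
      = (pkset σ).card := Finset.card_sdiff_add_card_inter _ _
  rw [lpk_eq_card, lpk_eq_card]
  omega

lemma inter_pair_card (s : Finset ℕ) (a b : ℕ) (hab : a ≠ b) :
    (s ∩ {a, b}).card = (if a ∈ s then 1 else 0) + (if b ∈ s then 1 else 0) := by
  rw [Finset.inter_comm, ← Finset.filter_mem_eq_inter, Finset.filter_insert,
    Finset.filter_singleton]
  split_ifs <;> simp_all

lemma pkset_le {m : ℕ} (σ : Equiv.Perm (Fin m)) {i : ℕ} (h : i ∈ pkset σ) :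
    1 ≤ i ∧ i ≤ m - 1 ∧ i < m := by
  rw [pkset_mem] at h
  omega

/-- the set of "bad" slots -/
def badset {m : ℕ} (σ : Equiv.Perm (Fin m)) : Finset ℕ :=
  insert m (pkset σ ∪ (pkset σ).image (· - 1))

lemma badset_card {m : ℕ} (σ : Equiv.Perm (Fin m)) :
    (badset σ).card = 2 * lpk m σ + 1 := by
  rw [badset, Finset.card_insert_of_notMem, Finset.card_union_of_disjoint,
    Finset.card_image_of_injOn, lpk_eq_card]
  · ring
  · intro x hx y hy hxy
    have hxy' : x - 1 = y - 1 := hxy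
    have := pkset_le σ hx
    have := pkset_le σ hy
    omega
  · rw [Finset.disjoint_left]
    intro x hx hx'
    rw [Finset.mem_image] at hx'
    obtain ⟨i, hi, hix⟩ := hx'
    have h1 := pkset_le σ hi
    have : i = x + 1 := by omega
    exact pkset_not_adjacent σ hx (this ▸ hi)
  · rw [Finset.mem_union, Finset.mem_image]
    rintro (h | ⟨i, hi, hix⟩)
    · have := pkset_le σ h
      omega
    · have := pkset_le σ hi
      omega

lemma badset_subset {m : ℕ} (σ : Equiv.Perm (Fin m)) : badset σ ⊆ Finset.range (m+1) := by
  intro x hx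
  rw [badset, Finset.mem_insert, Finset.mem_union, Finset.mem_image] at hx
  rw [Finset.mem_range]
  rcases hx with h | h | ⟨i, hi, hix⟩
  · omega
  · have := pkset_le σ h; omega
  · have := pkset_le σ hi; omega

lemma two_lpk_le {m : ℕ} (σ : Equiv.Perm (Fin m)) : 2 * lpk m σ ≤ m := by
  have h1 := badset_card σ
  have h2 := Finset.card_le_card (badset_subset σ)
  rw [Finset.card_range] at h2
  omega

lemma lpk_ins {m : ℕ} (σ : Equiv.Perm (Fin m)) (p : Fin (m+1)) :
    lpk (m+1) (insPerm σ p) = if (p:ℕ) ∈ badset σ then lpk m σ else lpk m σ + 1 := by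
  have hp := p.isLt
  have hsc := slot_count σ p
  have hpair := inter_pair_card (pkset σ) (p:ℕ) ((p:ℕ)+1) (by omega)
  have hmem : (p:ℕ) ∈ badset σ ↔ ((p:ℕ) = m ∨ (p:ℕ) ∈ pkset σ ∨ (p:ℕ)+1 ∈ pkset σ) := by
    rw [badset, Finset.mem_insert, Finset.mem_union, Finset.mem_image]
    constructor
    · rintro (h | h | ⟨i, hi, hix⟩)
      · exact Or.inl h
      · exact Or.inr (Or.inl h)
      · have := pkset_le σ hi
        have : i = (p:ℕ) + 1 := by omega
        exact Or.inr (Or.inr (this ▸ hi))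
    · rintro (h | h | h)
      · exact Or.inl h
      · exact Or.inr (Or.inl h)
      · exact Or.inr (Or.inr ⟨(p:ℕ)+1, h, by omega⟩)
  by_cases hb : (p:ℕ) ∈ badset σ
  · rw [if_pos hb]
    rw [hmem] at hb
    rcases hb with h | h | h
    · -- p = m : end slot
      have hnp : (p:ℕ) ∉ pkset σ := fun hc => by have := pkset_le σ hc; omega
      have hnp1 : (p:ℕ)+1 ∉ pkset σ := fun hc => by have := pkset_le σ hc; omega
      rw [if_neg hnp, if_neg hnp1] at hpair
      rw [if_neg (by omega)] at hsc
      omega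
    · have hq : (p:ℕ)+1 ≤ m := by have := pkset_le σ h; omega
      have hnp1 : (p:ℕ)+1 ∉ pkset σ := fun hc => pkset_not_adjacent σ h hc
      rw [if_pos h, if_neg hnp1] at hpair
      rw [if_pos hq] at hsc
      omega
    · have hq : (p:ℕ)+1 ≤ m := by have := pkset_le σ h; omega
      have hnp : (p:ℕ) ∉ pkset σ := fun hc => pkset_not_adjacent σ hc h
      rw [if_neg hnp, if_pos h] at hpair
      rw [if_pos hq] at hsc
      omega
  · rw [if_neg hb]
    rw [hmem] at hb
    push_neg at hb
    obtain ⟨hm, hnp, hnp1⟩ := hb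
    rw [if_neg hnp, if_neg hnp1] at hpair
    rw [if_pos (by omega)] at hsc
    omega

lemma slot_sum {m : ℕ} (σ : Equiv.Perm (Fin m)) :
    ∑ p : Fin (m+1), (X : Polynomial ℤ) ^ lpk (m+1) (insPerm σ p)
      = (2 * lpk m σ + 1) • (X : Polynomial ℤ) ^ lpk m σ
        + (m - 2 * lpk m σ) • (X : Polynomial ℤ) ^ (lpk m σ + 1) := by
  have hcard : (Finset.univ.filter (fun p : Fin (m+1) => (p:ℕ) ∈ badset σ)).card
      = 2 * lpk m σ + 1 := by
    rw [← badset_card σ]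
    refine Finset.card_nbij (i := fun p => (p:ℕ)) ?_ ?_ ?_
    · intro a ha
      exact (Finset.mem_filter.mp ha).2
    · intro a _ b _ hab
      exact Fin.ext hab
    · intro b hb
      have hb' := Finset.mem_coe.mp hb
      have := Finset.mem_range.mp (badset_subset σ hb')
      exact ⟨(⟨b, this⟩ : Fin (m+1)), by simpa using hb', rfl⟩
  have hcard2 : (Finset.univ.filter (fun p : Fin (m+1) => ¬ ((p:ℕ) ∈ badset σ))).card
      = m - 2 * lpk m σ := by
    have := Finset.card_filter_add_card_filter_not
      (s := (Finset.univ : Finset (Fin (m+1))))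
      (p := fun p : Fin (m+1) => (p:ℕ) ∈ badset σ)
    rw [hcard] at this
    simp only [Finset.card_univ, Fintype.card_fin] at this
    have h2k := two_lpk_le σ
    omega
  calc ∑ p : Fin (m+1), (X : Polynomial ℤ) ^ lpk (m+1) (insPerm σ p)
      = ∑ p : Fin (m+1),
        (if (p:ℕ) ∈ badset σ then (X : Polynomial ℤ) ^ lpk m σ else X ^ (lpk m σ + 1)) := by
        refine Finset.sum_congr rfl (fun p _ => ?_)
        rw [lpk_ins]
        split_ifs <;> rfl
    _ = _ := by
        rw [Finset.sum_ite, Finset.sum_const, Finset.sum_const, hcard, hcard2]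

lemma Fop_Xpow (m k : ℕ) :
    Fop m ((X : Polynomial ℤ)^k)
      = C ((m:ℤ)+1) * X^(k+1) + C (2*(k:ℤ)+1) * (X^k * (1-X)) := by
  have h := Fop_mono m k 0
  simpa using h

lemma pair_inj {m : ℕ} :
    Function.Injective
      (fun sp : Equiv.Perm (Fin m) × Fin (m+1) => insPerm sp.1 sp.2) := by
  rintro ⟨σ, p⟩ ⟨τ, r⟩ hab
  simp only at hab
  have hf : ∀ i, insFun σ p i = insFun τ r i := fun i => Equiv.ext_iff.mp hab i
  have hp := p.isLt; have hr := r.isLt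
  have hpr : p = r := by
    by_contra h
    have hv : (p:ℕ) ≠ (r:ℕ) := fun hc => h (Fin.ext hc)
    have h1 := congrArg Fin.val (hf p)
    have h1' : m = if (p:ℕ) = (r:ℕ) then m else
        if (p:ℕ) < (r:ℕ) then natp τ (p:ℕ) else natp τ ((p:ℕ)-1) := by
      simpa [insFun] using h1
    rw [if_neg hv] at h1'
    split_ifs at h1' with h2
    · have := natp_lt τ (show (p:ℕ) < m by omega)
      omega
    · have := natp_lt τ (show (p:ℕ)-1 < m by omega)
      omega
  subst hpr
  have hστ : σ = τ := by
    apply Equiv.ext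
    intro x
    have hx := x.isLt
    by_cases hlt : (x:ℕ) < (p:ℕ)
    · have h1 := congrArg Fin.val (hf x.castSucc)
      have h1' : (if (x:ℕ) = (p:ℕ) then m else
          if (x:ℕ) < (p:ℕ) then natp σ (x:ℕ) else natp σ ((x:ℕ)-1))
          = (if (x:ℕ) = (p:ℕ) then m else
          if (x:ℕ) < (p:ℕ) then natp τ (x:ℕ) else natp τ ((x:ℕ)-1)) := by
        simpa [insFun] using h1
      rw [if_neg (by omega), if_pos hlt, if_neg (by omega), if_pos hlt] at h1'
      rw [natp, dif_pos hx, natp, dif_pos hx] at h1'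
      apply Fin.ext
      simpa using h1'
    · have h1 := congrArg Fin.val (hf x.succ)
      have h1' : (if (x:ℕ)+1 = (p:ℕ) then m else
          if (x:ℕ)+1 < (p:ℕ) then natp σ ((x:ℕ)+1) else natp σ ((x:ℕ)+1-1))
          = (if (x:ℕ)+1 = (p:ℕ) then m else
          if (x:ℕ)+1 < (p:ℕ) then natp τ ((x:ℕ)+1) else natp τ ((x:ℕ)+1-1)) := by
        simpa [insFun] using h1
      rw [if_neg (by omega), if_neg (by omega), if_neg (by omega), if_neg (by omega)] at h1'
      rw [show (x:ℕ)+1-1 = (x:ℕ) from rfl, natp, dif_pos hx, natp, dif_pos hx] at h1'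
      apply Fin.ext
      simpa using h1'
  rw [hστ]

lemma Wrec (m : ℕ) : Wpoly (m+1) = Fop m (Wpoly m) := by
  have hbij : Function.Bijective
      (fun sp : Equiv.Perm (Fin m) × Fin (m+1) => insPerm sp.1 sp.2) := by
    rw [Fintype.bijective_iff_injective_and_card]
    refine ⟨pair_inj, ?_⟩
    simp [Fintype.card_perm, Fintype.card_fin, Nat.factorial_succ, Nat.mul_comm]
  have hreindex : Wpoly (m+1)
      = ∑ sp : Equiv.Perm (Fin m) × Fin (m+1), X ^ lpk (m+1) (insPerm sp.1 sp.2) :=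
    (Fintype.sum_bijective _ hbij _ _ (fun sp => rfl)).symm
  rw [hreindex, Fintype.sum_prod_type, Wpoly, Fop_sum]
  refine Finset.sum_congr rfl (fun σ _ => ?_)
  rw [slot_sum σ, Fop_Xpow]
  have h2k := two_lpk_le σ
  rw [nsmul_eq_mul, nsmul_eq_mul]
  simp only [C_int]
  push_cast [Nat.cast_sub h2k]
  ring

lemma main_identity (n : ℕ) : Wpoly (2*n+1) = Rp n := by
  induction n with
  | zero =>
    have hl : ∀ π : Equiv.Perm (Fin 1), lpk 1 π = 0 := by
      intro π
      simp [lpk]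
    have h1 : Wpoly (2*0+1) = 1 := by
      rw [show 2*0+1 = 1 from rfl, Wpoly]
      simp [hl, Fintype.card_perm]
    rw [h1, Rp]
    rw [Finset.sum_range_one]
    rw [show V 0 0 = 1 from rfl]
    norm_num
  | succ N ih =>
    have e1 : 2*(N+1)+1 = (2*N+2)+1 := by omega
    rw [e1, Wrec (2*N+2), show 2*N+2 = (2*N+1)+1 from rfl, Wrec (2*N+1), ih]
    rw [show (2*N+1)+1 = 2*N+2 from rfl]
    exact keyalg N

/-- For `n ≥ 1`, `Ŵ_{2n+1}(x) = Σ_{j=0}^n (2j+1)! V(n,j) x^j (1-x)^{n-j}` in `ℤ[x]`. -/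
theorem stmt8 (n : ℕ) (hn : 1 ≤ n) :
    Wpoly (2 * n + 1) =
      ∑ j ∈ Finset.range (n + 1),
        Polynomial.C (((2 * j + 1).factorial : ℤ) * V n j) *
          Polynomial.X ^ j * (1 - Polynomial.X) ^ (n - j) := by
  have h := main_identity n
  rw [Rp] at h
  exact h
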